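/- arXiv:math/0506469 — 5 statements merged into one kernel-verified Lean document; each statement's English description precedes it below -/
import Mathlib

section
/- Let k, ℓ ≥ 0 be integers and z > 0. Suppose λ is a partition of n contained in the (k,ℓ)-hook (i.e. λ_{k+1} ≤ ℓ) with λ_p ≥ ℓ for all p ≤ k and λ'_q ≥ k for all q ≤ ℓ, and write λ_p = (n+kℓ)/(k+ℓ) + c_p·√n for 1 ≤ p ≤ k and λ'_q = (n+kℓ)/(k+ℓ) + c'_q·√n for 1 ≤ q ≤ ℓ, where c_1 ≥ c_2 ≥ ⋯ ≥ c_k, c'_1 ≥ ⋯ ≥ c'_ℓ, c_1 + ⋯ + c_k + c'_1 + ⋯ + c'_ℓ = 0, and all c_p, c'_q ≤ z. Then for each 1 ≤ p ≤ k one has c_p ≥ -((ℓ+p-1)/(k-p+1))·z, and for each 1 ≤ q ≤ ℓ one has c'_q ≥ -((k+q-1)/(ℓ-q+1))·z. -/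
open Finset

lemma sum_Icc_le_of_le_of_antitone (k p : ℕ) (z : ℝ) (c : ℕ → ℝ)
    (hmono : ∀ i j, 1 ≤ i → i ≤ j → j ≤ k → c j ≤ c i)
    (hcz : ∀ i, 1 ≤ i → i ≤ k → c i ≤ z) (hp1 : 1 ≤ p) (hpk : p ≤ k) :
    ∑ i ∈ Icc 1 k, c i ≤ ((p : ℝ) - 1) * z + ((k : ℝ) - p + 1) * c p := by
  have hsplit : ∑ i ∈ Ico 1 p, c i + ∑ i ∈ Ico p (k + 1), c i = ∑ i ∈ Icc 1 k, c i :=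
    sum_Ico_consecutive c hp1 (by omega)
  have hhead : ∑ i ∈ Ico 1 p, c i ≤ ((p : ℝ) - 1) * z := by
    have h := sum_le_card_nsmul (Ico 1 p) c z fun i hi ↦ by
      rw [mem_Ico] at hi
      exact hcz i hi.1 (by omega)
    rwa [Nat.card_Ico, nsmul_eq_mul, Nat.cast_sub hp1, Nat.cast_one] at h
  have htail : ∑ i ∈ Ico p (k + 1), c i ≤ ((k : ℝ) - p + 1) * c p := by
    have h := sum_le_card_nsmul (Ico p (k + 1)) c (c p) fun i hi ↦ by
      rw [mem_Ico] at hi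
      exact hmono p i hp1 hi.1 (by omega)
    rwa [Nat.card_Ico, nsmul_eq_mul, Nat.cast_sub (by omega), Nat.cast_add_one,
      add_sub_right_comm] at h
  linarith

lemma sum_Icc_le_card_mul (l : ℕ) (z : ℝ) (c : ℕ → ℝ)
    (hcz : ∀ j, 1 ≤ j → j ≤ l → c j ≤ z) :
    ∑ j ∈ Icc 1 l, c j ≤ l * z := by
  have h := sum_le_card_nsmul (Icc 1 l) c z fun j hj ↦ by
    rw [mem_Icc] at hj
    exact hcz j hj.1 hj.2
  rwa [Nat.card_Icc, Nat.add_sub_cancel, nsmul_eq_mul] at h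

/-- If the sums cancel, the `k - p + 1` smallest terms of `c` must absorb the `l + p - 1` terms
bounded by `z`. -/
lemma neg_div_mul_le_of_sum_add_sum_eq_zero (k l p : ℕ) (z : ℝ) (c c' : ℕ → ℝ)
    (hmono : ∀ i j, 1 ≤ i → i ≤ j → j ≤ k → c j ≤ c i)
    (hsum : (∑ i ∈ Icc 1 k, c i) + (∑ j ∈ Icc 1 l, c' j) = 0)
    (hcz : ∀ i, 1 ≤ i → i ≤ k → c i ≤ z)
    (hc'z : ∀ j, 1 ≤ j → j ≤ l → c' j ≤ z) (hp1 : 1 ≤ p) (hpk : p ≤ k) :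
    -(((l : ℝ) + p - 1) / ((k : ℝ) - p + 1)) * z ≤ c p := by
  have hpos : (0 : ℝ) < (k : ℝ) - p + 1 := by
    have : (p : ℝ) ≤ k := by exact_mod_cast hpk
    linarith
  have hc := sum_Icc_le_of_le_of_antitone k p z c hmono hcz hp1 hpk
  have hc' := sum_Icc_le_card_mul l z c' hc'z
  rw [neg_mul, div_mul_eq_mul_div, neg_le, le_div_iff₀ hpos]
  linarith

theorem stmt_0_general (k l : ℕ) (z : ℝ) (c c' : ℕ → ℝ)
    (hmono : ∀ i j, 1 ≤ i → i ≤ j → j ≤ k → c j ≤ c i)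
    (hmono' : ∀ i j, 1 ≤ i → i ≤ j → j ≤ l → c' j ≤ c' i)
    (hsum : (∑ i ∈ Finset.Icc 1 k, c i) + (∑ j ∈ Finset.Icc 1 l, c' j) = 0)
    (hcz : ∀ i, 1 ≤ i → i ≤ k → c i ≤ z)
    (hc'z : ∀ j, 1 ≤ j → j ≤ l → c' j ≤ z) :
    (∀ p, 1 ≤ p → p ≤ k →
      -(((l : ℝ) + (p : ℝ) - 1) / ((k : ℝ) - (p : ℝ) + 1)) * z ≤ c p) ∧
    (∀ q, 1 ≤ q → q ≤ l →
      -(((k : ℝ) + (q : ℝ) - 1) / ((l : ℝ) - (q : ℝ) + 1)) * z ≤ c' q) :=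
  ⟨fun _ hp1 hpk ↦
      neg_div_mul_le_of_sum_add_sum_eq_zero k l _ z c c' hmono hsum hcz hc'z hp1 hpk,
    fun _ hq1 hql ↦ neg_div_mul_le_of_sum_add_sum_eq_zero l k _ z c' c hmono'
      (by rwa [add_comm] at hsum) hc'z hcz hq1 hql⟩

theorem stmt_0 (k l : ℕ) (z : ℝ) (hz : 0 < z) (c c' : ℕ → ℝ)
    (hmono : ∀ i j, 1 ≤ i → i ≤ j → j ≤ k → c j ≤ c i)
    (hmono' : ∀ i j, 1 ≤ i → i ≤ j → j ≤ l → c' j ≤ c' i)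
    (hsum : (∑ i ∈ Finset.Icc 1 k, c i) + (∑ j ∈ Finset.Icc 1 l, c' j) = 0)
    (hcz : ∀ i, 1 ≤ i → i ≤ k → c i ≤ z)
    (hc'z : ∀ j, 1 ≤ j → j ≤ l → c' j ≤ z) :
    (∀ p, 1 ≤ p → p ≤ k →
      -(((l : ℝ) + (p : ℝ) - 1) / ((k : ℝ) - (p : ℝ) + 1)) * z ≤ c p) ∧
    (∀ q, 1 ≤ q → q ≤ l →
      -(((k : ℝ) + (q : ℝ) - 1) / ((l : ℝ) - (q : ℝ) + 1)) * z ≤ c' q) :=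
  stmt_0_general k l z c c' hmono hmono' hsum hcz hc'z
end

section
/- ∫₀^∞ ∫_{-x₁/2}^{x₁} x₁·(x₁ - x₂)·(2x₁ + x₂)·(x₁ + 2x₂)·e^{-3(x₁² + x₂² + x₁x₂)} dx₂ dx₁ = 1/18. -/
/-!
On the domain `0 ≤ x₂ + x₁/2 ≤ 3x₁/2` all three Vandermonde factors are nonnegative, so the inner
integral is a nonnegative function of `x₁`. Both integrations are elementary: the inner integrand is
`∂/∂x₂` of `(x₁x₂²/3 + x₁²x₂/3 + x₁/9 - 2x₁³/3) e^{-3(x₁² + x₂² + x₁x₂)}`, and the resulting function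
of `x₁` is the derivative of `-(1/162) e^{-9x₁²} - (x₁²/6 + 4/81) e^{-9x₁²/4}`, which vanishes at
infinity and equals `-1/18` at `0`.
-/

open MeasureTheory Real Filter Topology Set

theorem hasDerivAt_mul_exp {f g : ℝ → ℝ} {f' g' x : ℝ} (hf : HasDerivAt f f' x)
    (hg : HasDerivAt g g' x) :
    HasDerivAt (fun y => f y * exp (g y)) ((f' + f x * g') * exp (g x)) x :=
  (hf.mul hg.exp).congr_deriv (by ring)

theorem hasDerivAt_quadratic (a b c x : ℝ) :
    HasDerivAt (fun y => a * y ^ 2 + b * y + c) (2 * a * x + b) x := by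
  simpa [mul_comm, mul_left_comm] using
    (((hasDerivAt_pow 2 x).const_mul a).add ((hasDerivAt_id x).const_mul b)).add_const c

theorem tendsto_pow_mul_exp_neg_mul_sq_atTop_nhds_zero (n : ℕ) {b : ℝ} (hb : 0 < b) :
    Tendsto (fun x : ℝ => x ^ n * exp (-b * x ^ 2)) atTop (𝓝 0) := by
  have hexp : Tendsto (fun x : ℝ => exp (-(1 / 2) * x)) atTop (𝓝 0) :=
    tendsto_exp_atBot.comp (tendsto_id.const_mul_atTop_of_neg (by norm_num))
  simpa only [rpow_natCast] using
    (rpow_mul_exp_neg_mul_sq_isLittleO_exp_neg hb n).trans_tendsto hexp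

namespace FirstRowDeviation

noncomputable def integrand (x y : ℝ) : ℝ :=
  x * ((x - y) * (2 * x + y) * (x + 2 * y)) * exp (-3 * (x ^ 2 + y ^ 2 + x * y))

noncomputable def innerPrimitive (x y : ℝ) : ℝ :=
  (x * y ^ 2 / 3 + x ^ 2 * y / 3 + x / 9 - 2 * x ^ 3 / 3) * exp (-3 * (x ^ 2 + y ^ 2 + x * y))

noncomputable def outerPrimitive (x : ℝ) : ℝ :=
  -(1 / 162) * exp (-9 * x ^ 2) - (x ^ 2 / 6 + 4 / 81) * exp (-(9 / 4) * x ^ 2)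

theorem integrand_nonneg {x y : ℝ} (hx : 0 ≤ x) (hy : y ∈ Icc (-x / 2) x) :
    0 ≤ integrand x y := by
  obtain ⟨hlo, hhi⟩ := hy
  unfold integrand
  have : 0 ≤ (x - y) * (2 * x + y) * (x + 2 * y) :=
    mul_nonneg (mul_nonneg (by linarith) (by linarith)) (by linarith)
  positivity

theorem hasDerivAt_innerPrimitive (x y : ℝ) :
    HasDerivAt (innerPrimitive x) (integrand x y) y := by
  have h := hasDerivAt_mul_exp
    (hasDerivAt_quadratic (x / 3) (x ^ 2 / 3) (x / 9 - 2 * x ^ 3 / 3) y)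
    (hasDerivAt_quadratic (-3) (-3 * x) (-3 * x ^ 2) y)
  refine (h.congr_of_eventuallyEq (.of_forall fun z => ?_)).congr_deriv ?_
  · unfold innerPrimitive
    ring_nf
  · unfold integrand
    ring_nf

theorem integral_integrand (x : ℝ) :
    ∫ y in (-x / 2)..x, integrand x y =
      x / 9 * exp (-9 * x ^ 2) + (3 * x ^ 3 / 4 - x / 9) * exp (-(9 / 4) * x ^ 2) := by
  have hcont : Continuous (integrand x) := by unfold integrand; fun_prop
  rw [intervalIntegral.integral_eq_sub_of_hasDerivAt (fun y _ => hasDerivAt_innerPrimitive x y)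
    (hcont.intervalIntegrable _ _)]
  have h₁ : -3 * (x ^ 2 + x ^ 2 + x * x) = -9 * x ^ 2 := by ring
  have h₂ : -3 * (x ^ 2 + (-x / 2) ^ 2 + x * (-x / 2)) = -(9 / 4) * x ^ 2 := by ring
  simp only [innerPrimitive, h₁, h₂]
  ring

theorem hasDerivAt_outerPrimitive (x : ℝ) :
    HasDerivAt outerPrimitive (∫ y in (-x / 2)..x, integrand x y) x := by
  have h := (hasDerivAt_mul_exp (hasDerivAt_quadratic 0 0 (-(1 / 162)) x)
    (hasDerivAt_quadratic (-9) 0 0 x)).fun_sub (hasDerivAt_mul_exp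
      (hasDerivAt_quadratic (1 / 6) 0 (4 / 81) x) (hasDerivAt_quadratic (-(9 / 4)) 0 0 x))
  refine (h.congr_of_eventuallyEq (.of_forall fun z => ?_)).congr_deriv ?_
  · unfold outerPrimitive
    ring_nf
  · rw [integral_integrand]
    ring_nf

theorem tendsto_outerPrimitive_atTop : Tendsto outerPrimitive atTop (𝓝 0) := by
  have h₁ := tendsto_pow_mul_exp_neg_mul_sq_atTop_nhds_zero 0 (b := 9) (by norm_num)
  have h₂ (n : ℕ) := tendsto_pow_mul_exp_neg_mul_sq_atTop_nhds_zero n (b := 9 / 4) (by norm_num)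
  have h := (h₁.const_mul (-(1 / 162))).sub
    (((h₂ 2).const_mul (1 / 6)).add ((h₂ 0).const_mul (4 / 81)))
  simp only [mul_zero, add_zero, sub_zero] at h
  refine h.congr fun x => ?_
  simp only [outerPrimitive, neg_mul]
  ring

end FirstRowDeviation

open FirstRowDeviation in
theorem stmt_7 :
    ∫ x₁ in Set.Ioi (0 : ℝ),
      (∫ x₂ in (-x₁ / 2)..x₁,
        x₁ * ((x₁ - x₂) * (2 * x₁ + x₂) * (x₁ + 2 * x₂)) *
          Real.exp (-3 * (x₁ ^ 2 + x₂ ^ 2 + x₁ * x₂))) = 1 / 18 := by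
  change ∫ x in Ioi (0 : ℝ), (∫ y in (-x / 2)..x, integrand x y) = 1 / 18
  have hnonneg (x : ℝ) (hx : x ∈ Ioi 0) : 0 ≤ ∫ y in (-x / 2)..x, integrand x y :=
    intervalIntegral.integral_nonneg (by linarith [mem_Ioi.mp hx])
      fun y hy => integrand_nonneg (le_of_lt hx) hy
  rw [integral_Ioi_of_hasDerivAt_of_nonneg' (fun x _ => hasDerivAt_outerPrimitive x) hnonneg
    tendsto_outerPrimitive_atTop]
  norm_num [outerPrimitive]
end

section
/- ∫₀^∞ ∫_{-x₁/2}^{x₁} [x₁·((x₁ - x₂)(2x₁ + x₂)(x₁ + 2x₂))²·e^{-6(x₁² + x₂² + x₁x₂)}] dx₂ dx₁ = √π/(288√2). -/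
/-!
Substituting `x₂ = u - x₁ / 2` separates the Gaussian,
`e^{-6(x₁² + x₂² + x₁x₂)} = e^{-9x₁²/2} e^{-6u²}`, turns the Vandermonde factor into
`2u (9x₁²/4 - u²)` and the chamber into the triangle `0 < u ≤ 3x₁/2`. After exchanging the
order of integration, the integral in `x₁ ≥ 2u/3` is elementary, since `x (x² - c²)² e^{-bx²}`
has a polynomial multiple of `e^{-bx²}` as primitive; it leaves `(2/9) u² e^{-8u²}`, whose
integral over `u > 0` is a second Gaussian moment.
-/

open MeasureTheory Real Set Filter Topology Function Polynomial

lemma hasDerivAt_exp_neg_mul_sq (b x : ℝ) :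
    HasDerivAt (fun x => exp (-b * x ^ 2)) (-2 * b * x * exp (-b * x ^ 2)) x := by
  convert ((hasDerivAt_pow 2 x).const_mul (-b)).exp using 1
  push_cast
  ring

section Gaussian

variable {b : ℝ}

lemma integrable_pow_mul_exp_neg_mul_sq (hb : 0 < b) (n : ℕ) :
    Integrable fun x : ℝ => x ^ n * exp (-b * x ^ 2) := by
  simpa [rpow_natCast] using
    integrable_rpow_mul_exp_neg_mul_sq hb (s := n) (by linarith [n.cast_nonneg (α := ℝ)])

lemma integrable_eval_mul_exp_neg_mul_sq (hb : 0 < b) (p : ℝ[X]) :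
    Integrable fun x : ℝ => p.eval x * exp (-b * x ^ 2) := by
  induction p using Polynomial.induction_on' with
  | add p q hp hq =>
    simp only [eval_add, add_mul]
    exact hp.add hq
  | monomial n a =>
    simpa only [eval_monomial, mul_assoc] using (integrable_pow_mul_exp_neg_mul_sq hb n).const_mul a

lemma tendsto_eval_mul_exp_neg_mul_sq_atTop (hb : 0 < b) (p : ℝ[X]) :
    Tendsto (fun x : ℝ => p.eval x * exp (-b * x ^ 2)) atTop (𝓝 0) := by
  induction p using Polynomial.induction_on' with
  | add p q hp hq => simpa only [eval_add, add_mul, add_zero] using hp.add hq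
  | monomial n a =>
    have h := ((rpow_mul_exp_neg_mul_sq_isLittleO_exp_neg hb n).trans_tendsto
      (tendsto_exp_atBot.comp (tendsto_id.const_mul_atTop_of_neg (by norm_num)))).const_mul a
    simpa only [eval_monomial, mul_assoc, rpow_natCast, mul_zero] using h

lemma integral_Ioi_sq_mul_exp_neg_mul_sq (hb : 0 < b) :
    ∫ x in Ioi 0, x ^ 2 * exp (-b * x ^ 2) = √(π / b) / (4 * b) := by
  have hgauss : Integrable fun x => exp (-b * x ^ 2) / (2 * b) :=
    (integrable_exp_neg_mul_sq hb).div_const _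
  have hint : Integrable fun x => x ^ 2 * exp (-b * x ^ 2) - exp (-b * x ^ 2) / (2 * b) :=
    (integrable_pow_mul_exp_neg_mul_sq hb 2).sub hgauss
  have hprim : ∀ x ∈ Ici (0 : ℝ), HasDerivAt (fun x => x * exp (-b * x ^ 2) / (-2 * b))
      (x ^ 2 * exp (-b * x ^ 2) - exp (-b * x ^ 2) / (2 * b)) x := fun x _ => by
    refine (((hasDerivAt_id' x).fun_mul (hasDerivAt_exp_neg_mul_sq b x)).div_const
      (-2 * b)).congr_deriv ?_
    field_simp
    ring
  have hlim : Tendsto (fun x => x * exp (-b * x ^ 2) / (-2 * b)) atTop (𝓝 0) := by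
    simpa using (tendsto_eval_mul_exp_neg_mul_sq_atTop hb X).div_const (-2 * b)
  calc ∫ x in Ioi 0, x ^ 2 * exp (-b * x ^ 2)
      = (∫ x in Ioi 0, x ^ 2 * exp (-b * x ^ 2) - exp (-b * x ^ 2) / (2 * b))
          + ∫ x in Ioi 0, exp (-b * x ^ 2) / (2 * b) := by
        rw [← integral_add hint.integrableOn hgauss.integrableOn]
        simp
    _ = 0 + √(π / b) / 2 / (2 * b) := by
        rw [integral_Ioi_of_hasDerivAt_of_tendsto' hprim hint.integrableOn hlim, integral_div,
          integral_gaussian_Ioi]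
        simp
    _ = √(π / b) / (4 * b) := by ring

lemma integral_Ioi_mul_sq_sub_sq_sq_mul_exp_neg_mul_sq (hb : 0 < b) (c : ℝ) :
    ∫ x in Ioi c, x * (x ^ 2 - c ^ 2) ^ 2 * exp (-b * x ^ 2) = exp (-b * c ^ 2) / b ^ 3 := by
  -- from the primitive `-(s² + 2s/b + 2/b²) e^{-bs} / (2b)` of `s² e^{-bs} / 2`, with `s = x² - c²`
  set p : ℝ[X] := C (-1 / (2 * b)) *
    ((X ^ 2 - C (c ^ 2)) ^ 2 + C (2 / b) * (X ^ 2 - C (c ^ 2)) + C (2 / b ^ 2)) with hp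
  have hprim : ∀ x ∈ Ici c, HasDerivAt (fun x => p.eval x * exp (-b * x ^ 2))
      (x * (x ^ 2 - c ^ 2) ^ 2 * exp (-b * x ^ 2)) x := fun x _ => by
    refine ((p.hasDerivAt x).fun_mul (hasDerivAt_exp_neg_mul_sq b x)).congr_deriv ?_
    simp [hp, -map_pow, derivative_pow]
    field_simp
    ring
  have hint : IntegrableOn (fun x => x * (x ^ 2 - c ^ 2) ^ 2 * exp (-b * x ^ 2)) (Ioi c) := by
    have h := integrable_eval_mul_exp_neg_mul_sq hb (X * (X ^ 2 - C (c ^ 2)) ^ 2)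
    simp only [eval_mul, eval_pow, eval_sub, eval_X, eval_C] at h
    exact h.integrableOn
  rw [integral_Ioi_of_hasDerivAt_of_tendsto' hprim hint
    (tendsto_eval_mul_exp_neg_mul_sq_atTop hb p)]
  simp [hp]
  field_simp

end Gaussian

lemma integral_Ioi_integral_Ioc_swap {f : ℝ → ℝ → ℝ} {k : ℝ} (hk : 0 < k)
    (hf : IntegrableOn (uncurry f) {p : ℝ × ℝ | 0 < p.1 ∧ 0 < p.2 ∧ p.2 ≤ k * p.1}) :
    ∫ x in Ioi 0, ∫ y in Ioc 0 (k * x), f x y = ∫ y in Ioi 0, ∫ x in Ici (y / k), f x y := by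
  set T := {p : ℝ × ℝ | 0 < p.1 ∧ 0 < p.2 ∧ p.2 ≤ k * p.1}
  have hT : MeasurableSet T :=
    (measurableSet_lt measurable_const measurable_fst).inter
      ((measurableSet_lt measurable_const measurable_snd).inter
        (measurableSet_le measurable_snd (measurable_fst.const_mul k)))
  have mem_left : ∀ x y, (x, y) ∈ T ↔ x ∈ Ioi 0 ∧ y ∈ Ioc 0 (k * x) := fun x y => Iff.rfl
  have mem_right : ∀ x y, (x, y) ∈ T ↔ y ∈ Ioi 0 ∧ x ∈ Ici (y / k) := fun x y => by
    simp only [T, mem_ofPred_eq, mem_Ioi, mem_Ici, div_le_iff₀ hk, mul_comm x k]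
    exact ⟨fun ⟨_, hy, hxy⟩ => ⟨hy, hxy⟩,
      fun ⟨hy, hxy⟩ => ⟨pos_of_mul_pos_right (hy.trans_le hxy) hk.le, hy, hxy⟩⟩
  have hleft : ∀ x, (Ioi 0).indicator (fun x => ∫ y in Ioc 0 (k * x), f x y) x =
      ∫ y, T.indicator (uncurry f) (x, y) := fun x => by
    by_cases hx : x ∈ Ioi 0
    · rw [indicator_of_mem hx, ← integral_indicator measurableSet_Ioc]
      simp only [indicator_apply, mem_left, hx, true_and, uncurry_apply_pair]
    · simp [mem_left, hx]
  have hright : ∀ y, (Ioi 0).indicator (fun y => ∫ x in Ici (y / k), f x y) y =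
      ∫ x, T.indicator (uncurry f) (x, y) := fun y => by
    by_cases hy : y ∈ Ioi 0
    · rw [indicator_of_mem hy, ← integral_indicator measurableSet_Ici]
      simp only [indicator_apply, mem_right, hy, true_and, uncurry_apply_pair]
    · simp [mem_right, hy]
  rw [← integral_indicator measurableSet_Ioi, ← integral_indicator measurableSet_Ioi,
    funext hleft, funext hright]
  exact integral_integral_swap (hf.integrable_indicator hT)

theorem stmt_8 :
    ∫ x₁ in Set.Ioi (0 : ℝ),
      (∫ x₂ in (-x₁ / 2)..x₁,
        x₁ * ((x₁ - x₂) * (2 * x₁ + x₂) * (x₁ + 2 * x₂)) ^ 2 *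
          Real.exp (-6 * (x₁ ^ 2 + x₂ ^ 2 + x₁ * x₂))) =
    Real.sqrt π / (288 * Real.sqrt 2) := by
  set g : ℝ → ℝ → ℝ := fun x u =>
    81 / 4 * u ^ 2 * exp (-6 * u ^ 2) *
      (x * (x ^ 2 - (u / (3 / 2)) ^ 2) ^ 2 * exp (-(9 / 2) * x ^ 2))
  have shift : ∀ x ∈ Ioi (0 : ℝ), ∫ x₂ in (-x / 2)..x,
      x * ((x - x₂) * (2 * x + x₂) * (x + 2 * x₂)) ^ 2 * exp (-6 * (x ^ 2 + x₂ ^ 2 + x * x₂)) =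
        ∫ u in Ioc 0 (3 / 2 * x), g x u := fun x hx => by
    have h := intervalIntegral.integral_comp_sub_right (a := 0) (b := 3 / 2 * x)
      (fun x₂ => x * ((x - x₂) * (2 * x + x₂) * (x + 2 * x₂)) ^ 2 *
        exp (-6 * (x ^ 2 + x₂ ^ 2 + x * x₂))) (x / 2)
    rw [show 0 - x / 2 = -x / 2 by ring, show 3 / 2 * x - x / 2 = x by ring] at h
    rw [← h, intervalIntegral.integral_of_le (by linarith [hx.out])]
    congr 1 with u
    rw [show -6 * (x ^ 2 + (u - x / 2) ^ 2 + x * (u - x / 2)) = -6 * u ^ 2 + -(9 / 2) * x ^ 2 by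
      ring, exp_add]
    ring
  have hg : Integrable (uncurry g) (volume.prod volume) := by
    have hprod (m n : ℕ) :=
      (integrable_pow_mul_exp_neg_mul_sq (b := 9 / 2) (by norm_num) m).mul_prod
        (integrable_pow_mul_exp_neg_mul_sq (b := 6) (by norm_num) n)
    refine ((((hprod 5 2).const_mul (81 / 4)).sub ((hprod 3 4).const_mul 18)).add
      ((hprod 1 6).const_mul 4)).congr (ae_of_all _ fun ⟨x, u⟩ => ?_)
    simp only [g, uncurry_apply_pair, Pi.add_apply, Pi.sub_apply]
    ring
  have inner : ∀ u ∈ Ioi (0 : ℝ),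
      ∫ x in Ici (u / (3 / 2)), g x u = 2 / 9 * (u ^ 2 * exp (-8 * u ^ 2)) := fun u _ => by
    rw [integral_Ici_eq_integral_Ioi, integral_const_mul,
      integral_Ioi_mul_sq_sub_sq_sq_mul_exp_neg_mul_sq (by norm_num),
      show -8 * u ^ 2 = -6 * u ^ 2 + -(9 / 2) * (u / (3 / 2)) ^ 2 by ring, exp_add]
    ring
  rw [setIntegral_congr_fun measurableSet_Ioi shift,
    integral_Ioi_integral_Ioc_swap (by norm_num) hg.integrableOn,
    setIntegral_congr_fun measurableSet_Ioi inner, integral_const_mul,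
    integral_Ioi_sq_mul_exp_neg_mul_sq (by norm_num)]
  rw [sqrt_div pi_pos.le, show (8 : ℝ) = 2 ^ 2 * 2 by norm_num, sqrt_mul (by positivity),
    sqrt_sq (by norm_num)]
  field_simp
  ring
end

section
/- ∫₀^∞ ∫_{-x₁/2}^{x₁} ((x₁ - x₂)(2x₁ + x₂)(x₁ + 2x₂))²·e^{-6(x₁² + x₂² + x₁x₂)} dx₂ dx₁ = π/(324√3). -/
/-!
Substituting `x₂ = x₁ u` and using that the Vandermonde factor is homogeneous of degree 3, the
integrand becomes `x₁⁷ V(u)² exp (-6 (1 + u + u²) x₁²)` with `V(u) = (1 - u)(2 + u)(1 + 2u)` and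
`u ∈ [-1/2, 1]`. Integrating out `x₁` first gives the odd Gaussian moment `3 / (6 (1 + u + u²))⁴`,
so the integral equals `(1/432) ∫ V(u)² / (1 + u + u²)⁴ du`. This rational integral has the
elementary antiderivative `(4/√3) arctan ((2u + 1)/√3) + u (u + 1) V(u) / (1 + u + u²)³`, and the
value `π/3 = arctan √3` at `u = 1` is the opening angle of the Weyl chamber.
-/

open MeasureTheory Real Set Nat

theorem integral_Ioi_pow_odd_mul_exp_neg_mul_sq (k : ℕ) {b : ℝ} (hb : 0 < b) :
    ∫ x in Ioi (0 : ℝ), x ^ (2 * k + 1) * exp (-b * x ^ 2) = k ! / (2 * b ^ (k + 1)) := by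
  have h := integral_rpow_mul_exp_neg_mul_rpow (p := 2) (q := (2 * k + 1 : ℕ)) two_pos
    (by linarith [(2 * k + 1 : ℕ).cast_nonneg (α := ℝ)]) hb
  have hk : (((2 * k + 1 : ℕ) : ℝ) + 1) / 2 = (k : ℝ) + 1 := by push_cast; ring
  have hk' : -(((2 * k + 1 : ℕ) : ℝ) + 1) / 2 = -((k + 1 : ℕ) : ℝ) := by push_cast; ring
  simp only [rpow_natCast, rpow_two, hk, hk', Gamma_nat_eq_factorial] at h
  rw [h, rpow_neg hb.le, rpow_natCast]
  field_simp

theorem integral_Ioi_intervalIntegral_mul_pow_mul_exp_comm (n : ℕ) {a b c : ℝ} (hab : a ≤ b)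
    (hc : 0 < c) {g h : ℝ → ℝ} (hg : Continuous g) (hh : Continuous h) (hch : ∀ u, c ≤ h u) :
    ∫ x in Ioi (0 : ℝ), ∫ u in a..b, g u * (x ^ n * exp (-h u * x ^ 2)) =
      ∫ u in a..b, g u * ∫ x in Ioi (0 : ℝ), x ^ n * exp (-h u * x ^ 2) := by
  obtain ⟨M, hM⟩ := isCompact_Icc.exists_bound_of_continuousOn (hg.continuousOn (s := Icc a b))
  have hmajor : Integrable (fun z : ℝ × ℝ => ‖z.1 ^ n * exp (-c * z.1 ^ 2)‖ * M)
      ((volume.restrict (Ioi 0)).prod (volume.restrict (Ioc a b))) := by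
    have hgauss : IntegrableOn (fun x : ℝ => x ^ n * exp (-c * x ^ 2)) (Ioi 0) := by
      simpa [rpow_natCast] using
        integrableOn_rpow_mul_exp_neg_mul_sq hc (neg_one_lt_zero.trans_le n.cast_nonneg)
    exact hgauss.norm.mul_prod (integrable_const M)
  have hF : Integrable (Function.uncurry fun x u => g u * (x ^ n * exp (-h u * x ^ 2)))
      ((volume.restrict (Ioi 0)).prod (volume.restrict (Ioc a b))) := by
    refine hmajor.mono' (by fun_prop) ?_
    rw [Measure.prod_restrict]
    filter_upwards [ae_restrict_mem (measurableSet_Ioi.prod measurableSet_Ioc)]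
      with ⟨x, u⟩ hxu
    rw [Function.uncurry_apply_pair, norm_mul, mul_comm]
    refine mul_le_mul ?_ (hM u (Ioc_subset_Icc_self hxu.2)) (norm_nonneg _) (norm_nonneg _)
    rw [norm_mul, norm_mul, norm_of_nonneg (exp_pos _).le, norm_of_nonneg (exp_pos _).le]
    gcongr
    nlinarith [hch u, sq_nonneg x]
  simp_rw [intervalIntegral.integral_of_le hab, ← integral_const_mul]
  exact integral_integral_swap hF

theorem three_fourths_le_one_add_add_sq (u : ℝ) : 3 / 4 ≤ 1 + u + u ^ 2 := by
  nlinarith [sq_nonneg (u + 1 / 2)]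

theorem one_add_add_sq_pos (u : ℝ) : 0 < 1 + u + u ^ 2 :=
  (by norm_num : (0 : ℝ) < 3 / 4).trans_le (three_fourths_le_one_add_add_sq u)

theorem integral_slice_eq_scaled (x : ℝ) :
    ∫ y in (-x / 2)..x, ((x - y) * (2 * x + y) * (x + 2 * y)) ^ 2 *
        exp (-6 * (x ^ 2 + y ^ 2 + x * y)) =
      ∫ u in (-1 / 2 : ℝ)..1, ((1 - u) * (2 + u) * (1 + 2 * u)) ^ 2 *
        (x ^ 7 * exp (-(6 * (1 + u + u ^ 2)) * x ^ 2)) := by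
  have h := intervalIntegral.smul_integral_comp_mul_left (a := -1 / 2) (b := 1)
    (fun y => ((x - y) * (2 * x + y) * (x + 2 * y)) ^ 2 *
      exp (-6 * (x ^ 2 + y ^ 2 + x * y))) x
  rw [show x * (-1 / 2) = -x / 2 by ring, mul_one] at h
  rw [← h, smul_eq_mul, ← intervalIntegral.integral_const_mul]
  refine intervalIntegral.integral_congr fun u _ => ?_
  rw [show -6 * (x ^ 2 + (x * u) ^ 2 + x * (x * u)) = -(6 * (1 + u + u ^ 2)) * x ^ 2 by ring]
  ring

theorem hasDerivAt_arctan_add_rational (u : ℝ) :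
    HasDerivAt (fun u => 4 / √3 * arctan ((2 * u + 1) / √3) +
        u * (u + 1) * ((1 - u) * (2 + u) * (1 + 2 * u)) / (1 + u + u ^ 2) ^ 3)
      (((1 - u) * (2 + u) * (1 + 2 * u)) ^ 2 / (1 + u + u ^ 2) ^ 4) u := by
  have hs : √3 ^ 2 = 3 := sq_sqrt (by norm_num)
  have hid := hasDerivAt_id' u
  have harctan := (((hid.const_mul 2).add_const 1).div_const √3).arctan.const_mul (4 / √3)
  have hrat := ((hid.fun_mul (hid.add_const 1)).fun_mul
    (((hid.const_sub 1).fun_mul (hid.const_add 2)).fun_mul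
      ((hid.const_mul 2).const_add 1))).fun_div
    (((hid.const_add 1).fun_add (hid.fun_pow 2)).fun_pow 3)
    (pow_ne_zero 3 (one_add_add_sq_pos u).ne')
  refine (harctan.fun_add hrat).congr_deriv ?_
  have hQ := one_add_add_sq_pos u
  field_simp
  rw [hs]
  ring

theorem integral_sq_vandermonde_div_pow_four : ∫ u in (-1 / 2 : ℝ)..1,
    ((1 - u) * (2 + u) * (1 + 2 * u)) ^ 2 / (1 + u + u ^ 2) ^ 4 = 4 * π / (3 * √3) := by
  have hcont : Continuous fun u : ℝ =>
      ((1 - u) * (2 + u) * (1 + 2 * u)) ^ 2 / (1 + u + u ^ 2) ^ 4 :=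
    .div (by fun_prop) (by fun_prop) fun u => pow_ne_zero 4 (one_add_add_sq_pos u).ne'
  rw [intervalIntegral.integral_eq_sub_of_hasDerivAt
    (fun u _ => hasDerivAt_arctan_add_rational u) (hcont.intervalIntegrable _ _)]
  have hs : (2 * 1 + 1) / √3 = √3 := by
    rw [div_eq_iff (by positivity), mul_self_sqrt (by norm_num)]; norm_num
  norm_num [hs, arctan_sqrt_three]
  ring

theorem stmt_9 :
    ∫ x₁ in Set.Ioi (0 : ℝ),
      (∫ x₂ in (-x₁ / 2)..x₁,
        ((x₁ - x₂) * (2 * x₁ + x₂) * (x₁ + 2 * x₂)) ^ 2 *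
          Real.exp (-6 * (x₁ ^ 2 + x₂ ^ 2 + x₁ * x₂))) =
    π / (324 * Real.sqrt 3) := by
  have hmoment (u : ℝ) : ∫ x in Ioi (0 : ℝ), x ^ 7 * exp (-(6 * (1 + u + u ^ 2)) * x ^ 2) =
      3 / (6 * (1 + u + u ^ 2)) ^ 4 := by
    have hb : 0 < 6 * (1 + u + u ^ 2) := by linarith [one_add_add_sq_pos u]
    rw [show 7 = 2 * 3 + 1 by rfl, integral_Ioi_pow_odd_mul_exp_neg_mul_sq 3 hb]
    norm_num [Nat.factorial]
    field_simp
    ring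
  simp only [integral_slice_eq_scaled]
  rw [integral_Ioi_intervalIntegral_mul_pow_mul_exp_comm 7 (by norm_num) (c := 9 / 2)
    (by norm_num) (by fun_prop) (by fun_prop)
    fun u => by linarith [three_fourths_le_one_add_add_sq u]]
  simp only [hmoment]
  calc _ = 1 / 432 * ∫ u in (-1 / 2 : ℝ)..1,
        ((1 - u) * (2 + u) * (1 + 2 * u)) ^ 2 / (1 + u + u ^ 2) ^ 4 := by
        rw [← intervalIntegral.integral_const_mul]
        refine intervalIntegral.integral_congr fun u _ => ?_
        have hQ := one_add_add_sq_pos u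
        field_simp
        ring
    _ = π / (324 * √3) := by
        rw [integral_sq_vandermonde_div_pow_four]
        field_simp
        ring
end

section
/- ∫₀^∞ ∫_{-x₁/2}^{x₁} (x₁ - x₂)(2x₁ + x₂)(x₁ + 2x₂)·e^{-3(x₁² + x₂² + x₁x₂)} dx₂ dx₁ = √π/27. -/
open MeasureTheory Real

/-!
With `Q = x₁² + x₂² + x₁x₂`, the integrand is the `x₂`-derivative of
`(x₂²/3 + x₁x₂/3 - 2x₁²/3 + 1/9) e^{-3Q}`, so the inner integral equals
`e^{-9x₁²}/9 + (3x₁²/4 - 1/9) e^{-9x₁²/4}`. The outer integral is then a combination of the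
half-line Gaussian moments `∫ e^{-bx²} = √(π/b)/2` and `∫ x² e^{-bx²} = √(π/b)/(4b)`, the latter
coming from the Gamma-integral formula and `Γ(3/2) = √π/2`.
-/

lemma integral_sq_mul_exp_neg_mul_sq_Ioi {b : ℝ} (hb : 0 < b) :
    ∫ x in Set.Ioi (0 : ℝ), x ^ 2 * exp (-b * x ^ 2) = √(π / b) / (4 * b) := by
  have hGamma : Gamma ((2 + 1) / 2) = √π / 2 := by
    rw [show ((2 + 1) / 2 : ℝ) = 1 / 2 + 1 by norm_num, Gamma_add_one (by norm_num),
      Gamma_one_half_eq]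
    ring
  have hpow : b ^ (-(2 + 1) / 2 : ℝ) = (b * √b)⁻¹ := by
    rw [show (-(2 + 1) / 2 : ℝ) = -(1 + 1 / 2) by norm_num, rpow_neg hb.le,
      rpow_add hb, rpow_one, sqrt_eq_rpow]
  have h := integral_rpow_mul_exp_neg_mul_rpow (p := 2) (q := 2) (by norm_num) (by norm_num) hb
  simp only [rpow_two] at h
  have hb' : 0 < √b := sqrt_pos.2 hb
  rw [h, hpow, hGamma, sqrt_div' _ hb.le]
  field_simp
  ring

lemma hasDerivAt_vandermonde_gaussian_primitive (x y : ℝ) :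
    HasDerivAt (fun y : ℝ => (y ^ 2 / 3 + x * y / 3 - 2 * x ^ 2 / 3 + 1 / 9) *
      exp (-3 * (x ^ 2 + y ^ 2 + x * y)))
      ((x - y) * (2 * x + y) * (x + 2 * y) * exp (-3 * (x ^ 2 + y ^ 2 + x * y))) y := by
  have hP : HasDerivAt (fun y : ℝ => y ^ 2 / 3 + x * y / 3 - 2 * x ^ 2 / 3 + 1 / 9)
      (2 * y / 3 + x / 3) y :=
    (((((hasDerivAt_pow 2 y).div_const 3).add
      (((hasDerivAt_id y).const_mul x).div_const 3)).sub_const (2 * x ^ 2 / 3)).add_const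
        (1 / 9)).congr_deriv (by ring)
  have hQ : HasDerivAt (fun y : ℝ => -3 * (x ^ 2 + y ^ 2 + x * y)) (-3 * (2 * y + x)) y :=
    ((((hasDerivAt_pow 2 y).const_add (x ^ 2)).add
      ((hasDerivAt_id y).const_mul x)).const_mul (-3)).congr_deriv (by ring)
  exact (hP.mul hQ.exp).congr_deriv (by ring)

lemma integral_vandermonde_gaussian_slice (x : ℝ) :
    ∫ y in (-x / 2)..x,
        (x - y) * (2 * x + y) * (x + 2 * y) * exp (-3 * (x ^ 2 + y ^ 2 + x * y)) =
      1 / 9 * exp (-9 * x ^ 2) + 3 / 4 * (x ^ 2 * exp (-(9 / 4) * x ^ 2)) -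
        1 / 9 * exp (-(9 / 4) * x ^ 2) := by
  rw [intervalIntegral.integral_eq_sub_of_hasDerivAt
      (fun y _ => hasDerivAt_vandermonde_gaussian_primitive x y)
      (Continuous.intervalIntegrable (by fun_prop) _ _),
    show -3 * (x ^ 2 + x ^ 2 + x * x) = -9 * x ^ 2 by ring,
    show -3 * (x ^ 2 + (-x / 2) ^ 2 + x * (-x / 2)) = -(9 / 4) * x ^ 2 by ring]
  ring

theorem stmt_10 :
    ∫ x₁ in Set.Ioi (0 : ℝ),
      (∫ x₂ in (-x₁ / 2)..x₁,
        (x₁ - x₂) * (2 * x₁ + x₂) * (x₁ + 2 * x₂) *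
          Real.exp (-3 * (x₁ ^ 2 + x₂ ^ 2 + x₁ * x₂))) =
    Real.sqrt π / 27 := by
  have hg₁ : Integrable fun x : ℝ => exp (-9 * x ^ 2) := integrable_exp_neg_mul_sq (by norm_num)
  have hg₂ : Integrable fun x : ℝ => exp (-(9 / 4) * x ^ 2) :=
    integrable_exp_neg_mul_sq (by norm_num)
  have hm₂ : Integrable fun x : ℝ => x ^ 2 * exp (-(9 / 4) * x ^ 2) := by
    simpa [rpow_two] using integrable_rpow_mul_exp_neg_mul_sq (b := 9 / 4) (s := 2)
      (by norm_num) (by norm_num)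
  simp_rw [integral_vandermonde_gaussian_slice]
  rw [integral_sub ((hg₁.const_mul _).fun_add (hm₂.const_mul _)).integrableOn
      (hg₂.const_mul _).integrableOn,
    integral_add (hg₁.const_mul _).integrableOn (hm₂.const_mul _).integrableOn,
    integral_const_mul, integral_const_mul, integral_const_mul, integral_gaussian_Ioi,
    integral_gaussian_Ioi, integral_sq_mul_exp_neg_mul_sq_Ioi (by norm_num),
    sqrt_div' _ (by norm_num), sqrt_div' _ (by norm_num)]
  have h₃ : √(9 : ℝ) = 3 := (sqrt_eq_iff_mul_self_eq_of_pos (by norm_num)).2 (by norm_num)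
  have h₃₂ : √(9 / 4 : ℝ) = 3 / 2 :=
    (sqrt_eq_iff_mul_self_eq_of_pos (by norm_num)).2 (by norm_num)
  rw [h₃, h₃₂]
  ring
end
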